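/- The union of the closures of Ω, Ω0, Ω1, Ω2 is all of ℝ², and the complement of Ω ∪ Ω0 ∪ Ω1 ∪ Ω2 in ℝ² is the degeneracy locus D, which is the union of the six closed half-lines originating at the receivers mi along the lines through pairs of receivers (each half-line being the prolongation of a segment joining two receivers beyond one endpoint). -/

import Mathlib

/-!
Write `p, q, r` for the unit vectors pointing from `m0, m1, m2` to `x`, and `a = q ∧ p`,
`b = r ∧ p`, `c = r ∧ q`. Then `Ω` is `a - b + c < 0`, and `Ω0, Ω1, Ω2` say that two of
`a, -b, c` are positive. The Plücker relation `(q ∧ r) p + (r ∧ p) q + (p ∧ q) r = 0` between unit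
vectors gives `|a| ≤ |b| + |c|` and its permutations, so when `a - b + c > 0` two of `a, -b, c`
are indeed positive. When `a - b + c = (q - r) ∧ (p - r) = 0`, the points `p, q, r` of the unit
circle are collinear, so two of them coincide: `x - mi` and `x - mj` lie on a common ray, which
happens exactly on the six half-lines. Conversely, two equal unit vectors violate every defining
inequality. Finally the half-lines are Lebesgue-null, so their complement is dense.
-/

open MeasureTheory Module

section HalfLine

variable {V : Type*} [AddCommGroup V] [Module ℝ V]

def halfLineBeyond (a b : V) : Set V := {x | ∃ t : ℝ, 0 ≤ t ∧ x = b + t • (b - a)}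

def degeneracyLocus (m0 m1 m2 : V) : Set V :=
  halfLineBeyond m0 m1 ∪ halfLineBeyond m1 m0 ∪ halfLineBeyond m0 m2 ∪ halfLineBeyond m2 m0 ∪
    halfLineBeyond m1 m2 ∪ halfLineBeyond m2 m1

theorem mem_halfLineBeyond_of_smul_sub_eq {a b x : V} {r₁ r₂ : ℝ} (h₁ : 0 ≤ r₁) (h₁₂ : r₁ < r₂)
    (h : r₁ • (x - a) = r₂ • (x - b)) : x ∈ halfLineBeyond a b := by
  have hne : r₂ - r₁ ≠ 0 := (sub_pos.2 h₁₂).ne'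
  refine ⟨r₁ / (r₂ - r₁), div_nonneg h₁ (sub_pos.2 h₁₂).le, ?_⟩
  rw [← sub_eq_iff_eq_add', div_eq_inv_mul, mul_smul, eq_inv_smul_iff₀ hne]
  linear_combination (norm := module) -h

theorem mem_halfLineBeyond_union_iff_sameRay {a b x : V} (hab : a ≠ b) :
    x ∈ halfLineBeyond a b ∪ halfLineBeyond b a ↔ SameRay ℝ (x - a) (x - b) := by
  constructor
  · rintro (⟨t, ht, rfl⟩ | ⟨t, ht, rfl⟩)
    · rw [show b + t • (b - a) - a = (1 + t) • (b - a) by module, add_sub_cancel_left]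
      exact sameRay_smul_smul_of_mul_nonneg (by positivity)
    · rw [show a + t • (a - b) - b = (1 + t) • (a - b) by module, add_sub_cancel_left]
      exact sameRay_smul_smul_of_mul_nonneg (by positivity)
  · intro h
    rcases eq_or_ne (x - a) 0 with hxa | hxa
    · exact Or.inr ⟨0, le_rfl, by simpa [sub_eq_zero] using hxa⟩
    rcases eq_or_ne (x - b) 0 with hxb | hxb
    · exact Or.inl ⟨0, le_rfl, by simpa [sub_eq_zero] using hxb⟩
    obtain ⟨r₁, r₂, hr₁, hr₂, h⟩ := h.exists_pos hxa hxb
    rcases lt_trichotomy r₁ r₂ with hlt | rfl | hgt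
    · exact Or.inl (mem_halfLineBeyond_of_smul_sub_eq hr₁.le hlt h)
    · exact absurd (sub_right_injective (smul_right_injective V hr₁.ne' h)) hab
    · exact Or.inr (mem_halfLineBeyond_of_smul_sub_eq hr₂.le hgt h.symm)

theorem mem_degeneracyLocus_iff_sameRay {m0 m1 m2 x : V} (h01 : m0 ≠ m1) (h02 : m0 ≠ m2)
    (h12 : m1 ≠ m2) :
    x ∈ degeneracyLocus m0 m1 m2 ↔ SameRay ℝ (x - m0) (x - m1) ∨ SameRay ℝ (x - m0) (x - m2) ∨
      SameRay ℝ (x - m1) (x - m2) := by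
  rw [← mem_halfLineBeyond_union_iff_sameRay h01, ← mem_halfLineBeyond_union_iff_sameRay h02,
    ← mem_halfLineBeyond_union_iff_sameRay h12, degeneracyLocus]
  simp only [Set.mem_union, or_assoc]

theorem halfLineBeyond_subset_mk' (a b : V) :
    halfLineBeyond a b ⊆ AffineSubspace.mk' b (ℝ ∙ (b - a)) := by
  rintro _ ⟨t, -, rfl⟩
  rw [SetLike.mem_coe, AffineSubspace.mem_mk', vsub_eq_sub, add_sub_cancel_left]
  exact Submodule.smul_mem _ t (Submodule.mem_span_singleton_self _)

end HalfLine

section Null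

variable {V : Type*} [NormedAddCommGroup V] [NormedSpace ℝ V] [MeasurableSpace V] [BorelSpace V]
  [FiniteDimensional ℝ V] (μ : Measure V) [μ.IsAddHaarMeasure]

theorem addHaar_halfLineBeyond (hV : 1 < finrank ℝ V) (a b : V) : μ (halfLineBeyond a b) = 0 := by
  refine measure_mono_null (halfLineBeyond_subset_mk' a b) (Measure.addHaar_affineSubspace μ _ ?_)
  intro htop
  have hdir := congrArg AffineSubspace.direction htop
  rw [AffineSubspace.direction_mk', AffineSubspace.direction_top] at hdir
  have := finrank_span_le_card (R := ℝ) ({b - a} : Set V)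
  rw [hdir, finrank_top] at this
  simp only [Set.toFinset_singleton, Finset.card_singleton] at this
  omega

theorem addHaar_degeneracyLocus (hV : 1 < finrank ℝ V) (m0 m1 m2 : V) :
    μ (degeneracyLocus m0 m1 m2) = 0 := by
  simp only [degeneracyLocus, measure_union_null_iff, addHaar_halfLineBeyond μ hV, and_self]

end Null

theorem eq_or_eq_zero_or_eq_one_of_norm_add_smul_sub {V : Type*} [NormedAddCommGroup V]
    [InnerProductSpace ℝ V] {p r : V} {t : ℝ} (hp : ‖p‖ = ‖r‖) (h : ‖r + t • (p - r)‖ = ‖r‖) :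
    p = r ∨ t = 0 ∨ t = 1 := by
  have hp' : ‖r + (p - r)‖ ^ 2 = ‖r‖ ^ 2 := by rw [add_sub_cancel, hp]
  rw [← sq_eq_sq₀ (norm_nonneg _) (norm_nonneg _), norm_add_sq_real, norm_smul, inner_smul_right,
    Real.norm_eq_abs, mul_pow, sq_abs] at h
  rw [norm_add_sq_real] at hp'
  have key : t * (t - 1) * ‖p - r‖ ^ 2 = 0 := by linear_combination h - t * hp'
  rcases mul_eq_zero.1 key with ht | hpr
  · rcases mul_eq_zero.1 ht with ht | ht
    · exact Or.inr (Or.inl ht)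
    · exact Or.inr (Or.inr (sub_eq_zero.1 ht))
  · exact Or.inl (sub_eq_zero.1 (norm_eq_zero.1 (pow_eq_zero_iff two_ne_zero |>.1 hpr)))

theorem two_pos_of_add_pos_of_abs_le {x y z : ℝ} (hx : |x| ≤ |y| + |z|) (hy : |y| ≤ |x| + |z|)
    (hz : |z| ≤ |x| + |y|) (h : 0 < x + y + z) :
    (0 < x ∧ 0 < y) ∨ (0 < x ∧ 0 < z) ∨ (0 < y ∧ 0 < z) := by
  rcases le_or_gt x 0 with hx0 | hx0 <;> rcases le_or_gt y 0 with hy0 | hy0 <;>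
    rcases le_or_gt z 0 with hz0 | hz0 <;>
    simp only [abs_of_nonpos, abs_of_pos, *] at hx hy hz <;>
    first | exact Or.inl ⟨hx0, hy0⟩ | exact Or.inr (Or.inl ⟨hx0, hz0⟩) |
      exact Or.inr (Or.inr ⟨hy0, hz0⟩) | (exfalso; linarith)

local notation "ℝ²" => EuclideanSpace ℝ (Fin 2)

def wedge (u v : ℝ²) : ℝ := u 0 * v 1 - u 1 * v 0

section Wedge

variable {p q r u v w : ℝ²}

theorem wedge_anticomm (u v : ℝ²) : wedge v u = -wedge u v := by
  unfold wedge; ring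

theorem wedge_self (u : ℝ²) : wedge u u = 0 := by
  unfold wedge; ring

theorem wedge_smul_smul (s t : ℝ) (u v : ℝ²) : wedge (s • u) (t • v) = s * t * wedge u v := by
  simp only [wedge, PiLp.smul_apply, smul_eq_mul]; ring

theorem wedge_sub_sub (p q r : ℝ²) :
    wedge (q - r) (p - r) = wedge q p - wedge r p + wedge r q := by
  simp only [wedge, PiLp.sub_apply]; ring

theorem wedge_smul_add_wedge_smul_add_wedge_smul (p q r : ℝ²) :
    wedge q r • p + wedge r p • q + wedge p q • r = 0 := by
  ext i
  fin_cases i <;>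
    simp only [wedge, Fin.zero_eta, Fin.mk_one, Fin.isValue, PiLp.add_apply, PiLp.smul_apply,
      smul_eq_mul, PiLp.zero_apply] <;>
    ring

theorem abs_wedge_mul_norm_le (p q r : ℝ²) :
    |wedge p q| * ‖r‖ ≤ |wedge q r| * ‖p‖ + |wedge r p| * ‖q‖ := by
  have h : wedge p q • r = -(wedge q r • p + wedge r p • q) := by
    rw [eq_neg_iff_add_eq_zero, add_comm]; exact wedge_smul_add_wedge_smul_add_wedge_smul p q r
  calc |wedge p q| * ‖r‖ = ‖wedge p q • r‖ := by rw [norm_smul, Real.norm_eq_abs]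
    _ = ‖wedge q r • p + wedge r p • q‖ := by rw [h, norm_neg]
    _ ≤ |wedge q r| * ‖p‖ + |wedge r p| * ‖q‖ := by
        simpa only [norm_smul, Real.norm_eq_abs] using norm_add_le (wedge q r • p) (wedge r p • q)

theorem wedge_inv_norm_smul_pos_iff (hu : u ≠ 0) (hv : v ≠ 0) :
    0 < wedge (‖u‖⁻¹ • u) (‖v‖⁻¹ • v) ↔ 0 < wedge u v := by
  rw [wedge_smul_smul, ← mul_inv]
  exact mul_pos_iff_of_pos_left (inv_pos.2 (mul_pos (norm_pos_iff.2 hu) (norm_pos_iff.2 hv)))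

theorem wedge_inv_norm_smul_neg_iff (hu : u ≠ 0) (hv : v ≠ 0) :
    wedge (‖u‖⁻¹ • u) (‖v‖⁻¹ • v) < 0 ↔ wedge u v < 0 := by
  rw [← neg_pos, ← wedge_anticomm, wedge_inv_norm_smul_pos_iff hv hu, wedge_anticomm, neg_pos]

theorem exists_eq_smul_of_wedge_eq_zero (hu : u ≠ 0) (h : wedge u v = 0) :
    ∃ t : ℝ, v = t • u := by
  have hu' : u 0 ^ 2 + u 1 ^ 2 ≠ 0 := by
    simpa [EuclideanSpace.real_norm_sq_eq, Fin.sum_univ_two] using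
      pow_ne_zero 2 (norm_ne_zero_iff.2 hu)
  refine ⟨(u 0 * v 0 + u 1 * v 1) / (u 0 ^ 2 + u 1 ^ 2), ?_⟩
  unfold wedge at h
  ext i
  fin_cases i <;>
    simp only [Fin.zero_eta, Fin.mk_one, Fin.isValue, PiLp.smul_apply, smul_eq_mul] <;>
    field_simp
  · linear_combination (-u 1) * h
  · linear_combination u 0 * h

theorem eq_or_eq_or_eq_of_wedge_sub_sub_eq_zero (hp : ‖p‖ = ‖r‖) (hq : ‖q‖ = ‖r‖)
    (h : wedge (q - r) (p - r) = 0) : p = q ∨ p = r ∨ q = r := by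
  rcases eq_or_ne p r with hpr | hpr
  · exact Or.inr (Or.inl hpr)
  obtain ⟨t, ht⟩ := exists_eq_smul_of_wedge_eq_zero (sub_ne_zero.2 hpr)
    (by rw [wedge_anticomm, h, neg_zero])
  rw [sub_eq_iff_eq_add'] at ht
  rcases eq_or_eq_zero_or_eq_one_of_norm_add_smul_sub hp (ht ▸ hq) with hpr' | rfl | rfl
  · exact absurd hpr' hpr
  · exact Or.inr (Or.inr (by rw [ht, zero_smul, add_zero]))
  · exact Or.inl (by rw [ht, one_smul, add_sub_cancel])

theorem regions_iff_pairwise_ne_of_norm_eq_one (hp : ‖p‖ = 1) (hq : ‖q‖ = 1) (hr : ‖r‖ = 1) :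
    (wedge q p - wedge r p + wedge r q < 0 ∨ (0 < wedge q p ∧ wedge r p < 0) ∨
      (0 < wedge q p ∧ 0 < wedge r q) ∨ (wedge r p < 0 ∧ 0 < wedge r q)) ↔
    ¬(p = q ∨ p = r ∨ q = r) := by
  constructor
  · have := wedge_anticomm p q
    have := wedge_anticomm p r
    have := wedge_anticomm q r
    rintro h (rfl | rfl | rfl) <;> simp only [wedge_self] at h <;>
      rcases h with h | ⟨h₁, h₂⟩ | ⟨h₁, h₂⟩ | ⟨h₁, h₂⟩ <;> linarith
  · intro hne
    rcases lt_trichotomy (wedge q p - wedge r p + wedge r q) 0 with hF | hF | hF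
    · exact Or.inl hF
    · exact absurd (eq_or_eq_or_eq_of_wedge_sub_sub_eq_zero (hp.trans hr.symm) (hq.trans hr.symm)
        (by rw [wedge_sub_sub, hF])) hne
    · have hpqr := abs_wedge_mul_norm_le p q r
      have hqrp := abs_wedge_mul_norm_le q r p
      have hrpq := abs_wedge_mul_norm_le r p q
      simp only [hp, hq, hr, mul_one, wedge_anticomm q p, wedge_anticomm r q, abs_neg]
        at hpqr hqrp hrpq
      rcases two_pos_of_add_pos_of_abs_le (x := wedge q p) (y := -wedge r p) (z := wedge r q)
        (by rw [abs_neg]; linarith) (by rw [abs_neg]; linarith) (by rw [abs_neg]; linarith)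
        (by linarith) with ⟨ha, hb⟩ | ⟨ha, hc⟩ | ⟨hb, hc⟩
      · exact Or.inr (Or.inl ⟨ha, neg_pos.1 hb⟩)
      · exact Or.inr (Or.inr (Or.inl ⟨ha, hc⟩))
      · exact Or.inr (Or.inr (Or.inr ⟨neg_pos.1 hb, hc⟩))

theorem regions_iff_not_sameRay (hu : u ≠ 0) (hv : v ≠ 0) (hw : w ≠ 0) :
    (wedge (‖v‖⁻¹ • v) (‖u‖⁻¹ • u) - wedge (‖w‖⁻¹ • w) (‖u‖⁻¹ • u) +
        wedge (‖w‖⁻¹ • w) (‖v‖⁻¹ • v) < 0 ∨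
      (0 < wedge v u ∧ wedge w u < 0) ∨ (0 < wedge v u ∧ 0 < wedge w v) ∨
      (wedge w u < 0 ∧ 0 < wedge w v)) ↔
    ¬(SameRay ℝ u v ∨ SameRay ℝ u w ∨ SameRay ℝ v w) := by
  have unit {z : ℝ²} (hz : z ≠ 0) : ‖‖z‖⁻¹ • z‖ = 1 := by
    rw [norm_smul, norm_inv, norm_norm, inv_mul_cancel₀ (norm_ne_zero_iff.2 hz)]
  rw [sameRay_iff_inv_norm_smul_eq_of_ne hu hv, sameRay_iff_inv_norm_smul_eq_of_ne hu hw,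
    sameRay_iff_inv_norm_smul_eq_of_ne hv hw,
    ← regions_iff_pairwise_ne_of_norm_eq_one (unit hu) (unit hv) (unit hw)]
  simp only [wedge_inv_norm_smul_pos_iff, wedge_inv_norm_smul_neg_iff, hu, hv, hw, ne_eq,
    not_false_eq_true]

end Wedge

/-- The closures of Ω, Ω0, Ω1, Ω2 cover the plane, and the complement of their
union is the degeneracy locus D, the union of the six closed half-lines
originating at the receivers along the lines through pairs of receivers
(each half-line being the prolongation of the segment joining two receivers
beyond one endpoint). -/
theorem regions_cover_and_degeneracy_locus (m0 m1 m2 : EuclideanSpace ℝ (Fin 2))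
    (hcr : (m1 - m0) 0 * (m2 - m0) 1 - (m1 - m0) 1 * (m2 - m0) 0 > 0) :
    let cross : EuclideanSpace ℝ (Fin 2) → EuclideanSpace ℝ (Fin 2) → ℝ :=
      fun u v => u 0 * v 1 - u 1 * v 0
    let d : EuclideanSpace ℝ (Fin 2) → EuclideanSpace ℝ (Fin 2) → EuclideanSpace ℝ (Fin 2) :=
      fun m x => x - m
    let nd : EuclideanSpace ℝ (Fin 2) → EuclideanSpace ℝ (Fin 2) → EuclideanSpace ℝ (Fin 2) :=
      fun m x => ‖x - m‖⁻¹ • (x - m)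
    let S : Set (EuclideanSpace ℝ (Fin 2)) := {x | x ≠ m0 ∧ x ≠ m1 ∧ x ≠ m2}
    let Ω : Set (EuclideanSpace ℝ (Fin 2)) := {x ∈ S |
      cross (nd m1 x) (nd m0 x) - cross (nd m2 x) (nd m0 x) + cross (nd m2 x) (nd m1 x) < 0}
    let Ω0 : Set (EuclideanSpace ℝ (Fin 2)) := {x ∈ S |
      cross (d m1 x) (d m0 x) > 0 ∧ cross (d m2 x) (d m0 x) < 0}
    let Ω1 : Set (EuclideanSpace ℝ (Fin 2)) := {x ∈ S |
      cross (d m1 x) (d m0 x) > 0 ∧ cross (d m2 x) (d m1 x) > 0}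
    let Ω2 : Set (EuclideanSpace ℝ (Fin 2)) := {x ∈ S |
      cross (d m2 x) (d m0 x) < 0 ∧ cross (d m2 x) (d m1 x) > 0}
    -- `hl a b` is the closed half-line prolonging the segment from `a` to `b` beyond `b`
    let hl : EuclideanSpace ℝ (Fin 2) → EuclideanSpace ℝ (Fin 2) → Set (EuclideanSpace ℝ (Fin 2)) :=
      fun a b => {x | ∃ t : ℝ, 0 ≤ t ∧ x = b + t • (b - a)}
    (closure Ω ∪ closure Ω0 ∪ closure Ω1 ∪ closure Ω2 = Set.univ) ∧
    ((Ω ∪ Ω0 ∪ Ω1 ∪ Ω2)ᶜ =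
      hl m0 m1 ∪ hl m1 m0 ∪ hl m0 m2 ∪ hl m2 m0 ∪ hl m1 m2 ∪ hl m2 m1) := by
  intro cross d nd S Ω Ω0 Ω1 Ω2 hl
  have h01 : m0 ≠ m1 := by rintro rfl; simp at hcr
  have h02 : m0 ≠ m2 := by rintro rfl; simp at hcr
  have h12 : m1 ≠ m2 := by rintro rfl; simp [mul_comm] at hcr
  have hD : (Ω ∪ Ω0 ∪ Ω1 ∪ Ω2)ᶜ = degeneracyLocus m0 m1 m2 := by
    ext x
    rw [Set.mem_compl_iff, mem_degeneracyLocus_iff_sameRay h01 h02 h12]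
    by_cases hxS : x ∈ S
    · simp only [Ω, Ω0, Ω1, Ω2, Set.mem_union, Set.mem_ofPred_eq, hxS, true_and, or_assoc]
      exact (regions_iff_not_sameRay (sub_ne_zero.2 hxS.1) (sub_ne_zero.2 hxS.2.1)
        (sub_ne_zero.2 hxS.2.2)).not_left
    · obtain rfl | rfl | rfl : x = m0 ∨ x = m1 ∨ x = m2 := by
        simpa only [S, Set.mem_ofPred_eq, not_and_or, not_not] using hxS
      all_goals simp [Ω, Ω0, Ω1, Ω2, S]
  refine ⟨?_, hD⟩
  rw [← closure_union, ← closure_union, ← closure_union, ← dense_iff_closure_eq,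
    ← compl_compl (Ω ∪ Ω0 ∪ Ω1 ∪ Ω2), ← interior_eq_empty_iff_dense_compl, hD]
  exact Measure.interior_eq_empty_of_null (addHaar_degeneracyLocus volume (by simp) m0 m1 m2)
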